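/- The state ρ₆₆ strongly violates the range criterion: for every nonzero product vector (s,t,v)⊗(x,y,z) in the range of ρ₆₆, the partially conjugated product vector (s,t,v)⊗(x̄,ȳ,z̄) (where x̄ denotes the complex conjugate of x) does not lie in the range of the partial transpose ρ₆₆^{T_B}. In particular ρ₆₆ is an edge state. -/
import Mathlib


open Matrix ComplexOrder

noncomputable def N66 : Matrix (Fin 9) (Fin 9) ℂ :=
  !![1, 0, 0, 0, 0, 0, 0, 0, -1;
     0, 2, 0, -1, 0, 0, 0, 0, 0;
     0, 0, 1, 0, 0, 0, 1, 0, 0;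
     0, -1, 0, 1, 0, 0, 0, 0, 1;
     0, 0, 0, 0, 1, 0, 1, 0, 0;
     0, 0, 0, 0, 0, 1, 0, -1, 0;
     0, 0, 1, 0, 1, 0, 2, 0, 0;
     0, 0, 0, 0, 0, -1, 0, 1, 0;
     -1, 0, 0, 1, 0, 0, 0, 0, 3]

/-- The index map `(i, j) ↦ 3 i + j` from `Fin 3 × Fin 3` to `Fin 9`. -/
def idx (p : Fin 3 × Fin 3) : Fin 9 :=
  ⟨3 * p.1.val + p.2.val, by have h1 := p.1.isLt; have h2 := p.2.isLt; omega⟩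

/-- The state `ρ₆₆`, viewed as an operator on `ℂ³ ⊗ ℂ³`. -/
noncomputable def rho66 : Matrix (Fin 3 × Fin 3) (Fin 3 × Fin 3) ℂ :=
  fun p q => (1 / 13 : ℂ) * N66 (idx p) (idx q)

/-- The partial transpose on the second factor: `(ρ^{T_B})_{(i,j),(k,l)} = ρ_{(i,l),(k,j)}`. -/
noncomputable def ptrans (ρ : Matrix (Fin 3 × Fin 3) (Fin 3 × Fin 3) ℂ) :
    Matrix (Fin 3 × Fin 3) (Fin 3 × Fin 3) ℂ :=
  fun p q => ρ (p.1, q.2) (q.1, p.2)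

/-- The product vector `a ⊗ b ∈ ℂ³ ⊗ ℂ³`, with `(i,j)`-th component `a i * b j`. -/
def prodVec (a b : Fin 3 → ℂ) : Fin 3 × Fin 3 → ℂ := fun p => a p.1 * b p.2

set_option maxHeartbeats 1000000 in
/-- `ρ₆₆` strongly violates the range criterion (is an edge state):
no nonzero product vector `a ⊗ b` lies in the range of `ρ₆₆` while `a ⊗ b̄`
lies in the range of `ρ₆₆^{T_B}`. -/
theorem rho66_edge :
    ∀ a b : Fin 3 → ℂ, prodVec a b ≠ 0 →
      prodVec a b ∈ LinearMap.range rho66.mulVecLin →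
      prodVec a (fun j => starRingEnd ℂ (b j)) ∉
        LinearMap.range (ptrans rho66).mulVecLin := by
  intro a b hne hr hc
  obtain ⟨w, hw⟩ := hr
  obtain ⟨w', hw'⟩ := hc
  -- component equations for the range of rho66
  have HE : ∀ p : Fin 3 × Fin 3, a p.1 * b p.2 =
      rho66 p (0,0) * w (0,0) + rho66 p (0,1) * w (0,1) + rho66 p (0,2) * w (0,2) +
      rho66 p (1,0) * w (1,0) + rho66 p (1,1) * w (1,1) + rho66 p (1,2) * w (1,2) +
      rho66 p (2,0) * w (2,0) + rho66 p (2,1) * w (2,1) + rho66 p (2,2) * w (2,2) := by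
    intro p
    have h0 := congrFun hw p
    have h1 : a p.1 * b p.2 = ∑ q : Fin 3 × Fin 3, rho66 p q * w q := by
      simpa [Matrix.mulVecLin_apply, Matrix.mulVec, dotProduct, prodVec] using h0.symm
    rw [h1, Fintype.sum_prod_type]
    simp [Fin.sum_univ_three]
    ring
  have HF : ∀ p : Fin 3 × Fin 3, a p.1 * starRingEnd ℂ (b p.2) =
      ptrans rho66 p (0,0) * w' (0,0) + ptrans rho66 p (0,1) * w' (0,1) +
      ptrans rho66 p (0,2) * w' (0,2) +
      ptrans rho66 p (1,0) * w' (1,0) + ptrans rho66 p (1,1) * w' (1,1) +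
      ptrans rho66 p (1,2) * w' (1,2) +
      ptrans rho66 p (2,0) * w' (2,0) + ptrans rho66 p (2,1) * w' (2,1) +
      ptrans rho66 p (2,2) * w' (2,2) := by
    intro p
    have h0 := congrFun hw' p
    have h1 : a p.1 * starRingEnd ℂ (b p.2) = ∑ q : Fin 3 × Fin 3, ptrans rho66 p q * w' q := by
      simpa [Matrix.mulVecLin_apply, Matrix.mulVec, dotProduct, prodVec] using h0.symm
    rw [h1, Fintype.sum_prod_type]
    simp [Fin.sum_univ_three]
    ring
  have e20 := HE (2,0); have e02 := HE (0,2); have e11 := HE (1,1)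
  have e12 := HE (1,2); have e21 := HE (2,1)
  have e00 := HE (0,0); have e01 := HE (0,1); have e10 := HE (1,0); have e22 := HE (2,2)
  have f00 := HF (0,0); have f11 := HF (1,1)
  have f02 := HF (0,2); have f12 := HF (1,2); have f20 := HF (2,0)
  have f10 := HF (1,0); have f21 := HF (2,1)
  norm_num [rho66, ptrans, N66, idx, Matrix.cons_val', Matrix.cons_val_zero,
    Matrix.cons_val_one, Matrix.head_cons, Matrix.cons_val_succ]
    at e20 e02 e11 e12 e21 e00 e01 e10 e22 f00 f11 f02 f12 f20 f10 f21
  -- the six linear constraints coming from the kernels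
  have hE1 : a 2 * b 0 - a 0 * b 2 - a 1 * b 1 = 0 := by
    linear_combination e20 - e02 - e11
  have hE2 : a 1 * b 2 + a 2 * b 1 = 0 := by
    linear_combination e12 + e21
  have hE3 : a 0 * b 0 - a 0 * b 1 - 2 * (a 1 * b 0) + a 2 * b 2 = 0 := by
    linear_combination e00 - e01 - 2 * e10 + e22
  have hF1 : a 0 * starRingEnd ℂ (b 0) + a 1 * starRingEnd ℂ (b 1) = 0 := by
    linear_combination f00 + f11
  have hF2 : (a 0 - a 1) * starRingEnd ℂ (b 2) + a 2 * starRingEnd ℂ (b 0) = 0 := by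
    linear_combination f02 - f12 + f20
  have hF3 : a 2 * starRingEnd ℂ (b 1) - a 1 * starRingEnd ℂ (b 0) = 0 := by
    linear_combination f21 - f10
  -- conjugated versions of the F constraints
  have hFc1 : starRingEnd ℂ (a 0) * b 0 + starRingEnd ℂ (a 1) * b 1 = 0 := by
    have := congrArg (starRingEnd ℂ) hF1
    simpa using this
  have hFc2 : (starRingEnd ℂ (a 0) - starRingEnd ℂ (a 1)) * b 2
      + starRingEnd ℂ (a 2) * b 0 = 0 := by
    have := congrArg (starRingEnd ℂ) hF2
    simpa using this
  have hFc3 : starRingEnd ℂ (a 2) * b 1 - starRingEnd ℂ (a 1) * b 0 = 0 := by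
    have := congrArg (starRingEnd ℂ) hF3
    simpa using this
  -- nonvanishing facts
  have hbne : ¬ (b 0 = 0 ∧ b 1 = 0 ∧ b 2 = 0) := by
    rintro ⟨h0, h1, h2⟩
    apply hne
    funext p
    obtain ⟨i, j⟩ := p
    fin_cases j <;> simp [prodVec, h0, h1, h2]
  have hane : ¬ (a 0 = 0 ∧ a 1 = 0 ∧ a 2 = 0) := by
    rintro ⟨h0, h1, h2⟩
    apply hne
    funext p
    obtain ⟨i, j⟩ := p
    fin_cases i <;> simp [prodVec, h0, h1, h2]
  by_cases hv : a 2 = 0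
  · by_cases ht : a 1 = 0
    · -- v = 0, t = 0, so s ≠ 0
      have hs : a 0 ≠ 0 := fun h => hane ⟨h, ht, hv⟩
      have hz : b 2 = 0 := by
        have h : a 0 * b 2 = 0 := by linear_combination -hE1 + b 0 * hv - b 1 * ht
        exact (mul_eq_zero.mp h).resolve_left hs
      have hx : b 0 = 0 := by
        have h : a 0 * starRingEnd ℂ (b 0) = 0 := by
          linear_combination hF1 - starRingEnd ℂ (b 1) * ht
        have := (mul_eq_zero.mp h).resolve_left hs
        simpa using this
      have hy : b 1 = 0 := by
        have h : a 0 * b 1 = 0 := by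
          linear_combination -hE3 + a 0 * hx - 2 * b 0 * ht + b 2 * hv
        exact (mul_eq_zero.mp h).resolve_left hs
      exact hbne ⟨hx, hy, hz⟩
    · -- v = 0, t ≠ 0
      have hx : b 0 = 0 := by
        have h : a 1 * starRingEnd ℂ (b 0) = 0 := by
          linear_combination -hF3 + starRingEnd ℂ (b 1) * hv
        have := (mul_eq_zero.mp h).resolve_left ht
        simpa using this
      have hz : b 2 = 0 := by
        have h : a 1 * b 2 = 0 := by linear_combination hE2 - b 1 * hv
        exact (mul_eq_zero.mp h).resolve_left ht
      have hy : b 1 = 0 := by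
        have h : a 1 * b 1 = 0 := by linear_combination -hE1 + b 0 * hv - a 0 * hz
        exact (mul_eq_zero.mp h).resolve_left ht
      exact hbne ⟨hx, hy, hz⟩
  · by_cases hy : b 1 = 0
    · by_cases ht : a 1 = 0
      · by_cases hx : b 0 = 0
        · -- v ≠ 0, y = 0, t = 0, x = 0 : E3 gives v z = 0
          have hz : b 2 = 0 := by
            have h : a 2 * b 2 = 0 := by
              linear_combination hE3 - a 0 * hx + a 0 * hy + 2 * b 0 * ht
            exact (mul_eq_zero.mp h).resolve_left hv
          exact hbne ⟨hx, hy, hz⟩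
        · -- v ≠ 0, y = 0, t = 0, x ≠ 0
          have hX : starRingEnd ℂ (b 0) ≠ 0 := by
            simpa using hx
          have hs : a 0 = 0 := by
            have h : a 0 * starRingEnd ℂ (b 0) = 0 := by
              linear_combination hF1 - starRingEnd ℂ (b 1) * ht
            exact (mul_eq_zero.mp h).resolve_right hX
          have h : a 2 * starRingEnd ℂ (b 0) = 0 := by
            linear_combination hF2 - starRingEnd ℂ (b 2) * hs + starRingEnd ℂ (b 2) * ht
          exact hX ((mul_eq_zero.mp h).resolve_left hv)
      · -- v ≠ 0, y = 0, t ≠ 0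
        have hz : b 2 = 0 := by
          have h : a 1 * b 2 = 0 := by linear_combination hE2 - a 2 * hy
          exact (mul_eq_zero.mp h).resolve_left ht
        have hx : b 0 = 0 := by
          have hY : starRingEnd ℂ (b 1) = 0 := by simp [hy]
          have h : a 1 * starRingEnd ℂ (b 0) = 0 := by
            linear_combination -hF3 + a 2 * hY
          have := (mul_eq_zero.mp h).resolve_left ht
          simpa using this
        exact hbne ⟨hx, hy, hz⟩
    · -- main case: v ≠ 0, y ≠ 0
      have ht : a 1 ≠ 0 := by
        intro ht
        have h : a 2 * starRingEnd ℂ (b 1) = 0 := by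
          linear_combination hF3 + starRingEnd ℂ (b 0) * ht
        have := (mul_eq_zero.mp h).resolve_left hv
        exact hy (by simpa using this)
      have hT : starRingEnd ℂ (a 1) ≠ 0 := by simpa using ht
      -- notation: s = a 0, t = a 1, v = a 2, S,T,V their conjugates, x y z = b
      -- (A) : S*V + T^2 = 0
      have hA : starRingEnd ℂ (a 0) * starRingEnd ℂ (a 2) + starRingEnd ℂ (a 1) ^ 2 = 0 := by
        have h : b 1 * (starRingEnd ℂ (a 0) * starRingEnd ℂ (a 2)
            + starRingEnd ℂ (a 1) ^ 2) = 0 := by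
          linear_combination starRingEnd ℂ (a 1) * hFc1 + starRingEnd ℂ (a 0) * hFc3
        exact (mul_eq_zero.mp h).resolve_left hy
      -- (1) : s*v + t^2 = 0
      have h1 : a 0 * a 2 + a 1 ^ 2 = 0 := by
        have h := congrArg (starRingEnd ℂ) hA
        simp only [map_add, _root_.map_mul, map_pow, map_zero, Complex.conj_conj] at h
        exact h
      -- (R) : v*V = 2*t*T
      have hR : a 2 * starRingEnd ℂ (a 2) = 2 * (a 1 * starRingEnd ℂ (a 1)) := by
        have hP : a 1 * a 2 * b 0 = 2 * a 1 ^ 2 * b 1 := by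
          linear_combination a 1 * hE1 + a 0 * hE2 - b 1 * h1
        have h : b 1 * (a 1 * (a 2 * starRingEnd ℂ (a 2) - 2 * (a 1 * starRingEnd ℂ (a 1)))) = 0 := by
          linear_combination a 1 * a 2 * hFc3 + starRingEnd ℂ (a 1) * hP
        have h2 := (mul_eq_zero.mp h).resolve_left hy
        have h3 := (mul_eq_zero.mp h2).resolve_left ht
        linear_combination h3
      -- (★) : t*V^2 = (S - T)*v*T, then its conjugate
      have hstar : a 1 * starRingEnd ℂ (a 2) ^ 2
          = (starRingEnd ℂ (a 0) - starRingEnd ℂ (a 1)) * a 2 * starRingEnd ℂ (a 1) := by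
        have h : b 1 * (a 1 * starRingEnd ℂ (a 2) ^ 2
            - (starRingEnd ℂ (a 0) - starRingEnd ℂ (a 1)) * a 2 * starRingEnd ℂ (a 1)) = 0 := by
          linear_combination a 1 * starRingEnd ℂ (a 1) * hFc2
            - starRingEnd ℂ (a 1) * (starRingEnd ℂ (a 0) - starRingEnd ℂ (a 1)) * hE2
            + a 1 * starRingEnd ℂ (a 2) * hFc3
        have h' := (mul_eq_zero.mp h).resolve_left hy
        linear_combination h'
      have hstar' : starRingEnd ℂ (a 1) * a 2 ^ 2
          = (a 0 - a 1) * starRingEnd ℂ (a 2) * a 1 := by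
        have h := congrArg (starRingEnd ℂ) hstar
        simp only [map_sub, _root_.map_mul, map_pow, Complex.conj_conj] at h
        exact h
      -- (v3) : v^3 = 2*t^2*(s - t)
      have hv3 : a 2 ^ 3 = 2 * a 1 ^ 2 * (a 0 - a 1) := by
        have h : starRingEnd ℂ (a 1) * (a 2 ^ 3 - 2 * a 1 ^ 2 * (a 0 - a 1)) = 0 := by
          linear_combination a 2 * hstar' + (a 0 - a 1) * a 1 * hR
        have := (mul_eq_zero.mp h).resolve_left hT
        linear_combination this
      -- (Q) : 2*t^2*(s-2t) = s*t*v + v^3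
      have hq2 : (a 0 - 2 * a 1) * a 1 * starRingEnd ℂ (a 2)
          = (a 0 * a 1 + a 2 ^ 2) * starRingEnd ℂ (a 1) := by
        have h : b 1 * ((a 0 - 2 * a 1) * a 1 * starRingEnd ℂ (a 2)
            - (a 0 * a 1 + a 2 ^ 2) * starRingEnd ℂ (a 1)) = 0 := by
          linear_combination a 1 * starRingEnd ℂ (a 1) * hE3
            - a 2 * starRingEnd ℂ (a 1) * hE2 + (a 0 - 2 * a 1) * a 1 * hFc3
        have h' := (mul_eq_zero.mp h).resolve_left hy
        linear_combination h'
      have hq4 : 2 * a 1 ^ 2 * (a 0 - 2 * a 1) = a 0 * a 1 * a 2 + a 2 ^ 3 := by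
        have h : starRingEnd ℂ (a 1) * (2 * a 1 ^ 2 * (a 0 - 2 * a 1)
            - (a 0 * a 1 * a 2 + a 2 ^ 3)) = 0 := by
          linear_combination a 2 * hq2 - (a 0 - 2 * a 1) * a 1 * hR
        have := (mul_eq_zero.mp h).resolve_left hT
        linear_combination this
      -- final contradiction : t^3 = 0
      have hfin : a 1 ^ 3 = 0 := by
        linear_combination -hq4 - hv3 - a 1 * h1
      exact ht (pow_eq_zero_iff (by norm_num : (3:ℕ) ≠ 0) |>.mp hfin)
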